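/- arXiv:2110.01201 — 2 statements merged into one kernel-verified Lean document; each statement's English description precedes it below -/
import Mathlib

section
/- Let (M, d) be a metric space. Let W: M × M × (0,∞) → (0,∞) be such that for each x, y ∈ M the function W(x,y,·) is non-decreasing and W(x,y,R)/W(x,y,r) ≤ C_2·(R/r)^δ for all R ≥ r > 0, for some C_2 ≥ 1 and δ > 0 not depending on x, y. Let f: [0,∞) → (0,∞) be a positive function and let g: (0,∞) → (0,∞) be increasing with g(R)/g(r) ≥ c_1·(R/r)^α for all R ≥ r > 0, for some c_1 ∈ (0,1] and α > 0. Let p: (0,∞) × M × M → [0,∞) be measurable with p(s; x, y) ≤ (1/W(x,y,s))·e^{−g(f(d(x,y))/s)} for all s > 0 and x, y ∈ M. Let φ be a Bernstein function with φ(0) = 0 satisfying φ(λθ) ≤ C_3·λ^β·φ(θ) for all λ ∈ (0,1] and all θ > 0, for some β ∈ (0,1] and C_3 ≥ 1, with subordinator laws μ_t. Then there is a constant C ≥ 1, depending only on c_1, C_2, C_3, δ, α, β and g(1), such that for all x, y ∈ M and all t > 0: p_φ(t; x, y) := ∫_{(0,∞)} p(s; x, y) μ_t(ds) ≤ C ·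 min{1/W(x, y, 1/φ^{−1}(1/t)), t·φ(1/f(d(x,y)))/W(x, y, f(d(x,y)))}, where φ^{−1}(u) = inf{λ > 0 : φ(λ) ≥ u}. -/
set_option maxHeartbeats 1000000

open MeasureTheory Real Set
open scoped ENNReal

noncomputable section

/-- A Bernstein function: continuous on `[0,∞)`, smooth on `(0,∞)`, nonnegative, and
`(-1)^(n-1) φ^(n)(u) ≥ 0` for all `u > 0` and `n ≥ 1`. -/
def IsBernstein (φ : ℝ → ℝ) : Prop :=
  ContinuousOn φ (Set.Ici 0) ∧ ContDiffOn ℝ (⊤ : ℕ∞) φ (Set.Ioi 0) ∧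
  (∀ x ∈ Set.Ici (0 : ℝ), 0 ≤ φ x) ∧
  ∀ n : ℕ, 1 ≤ n → ∀ u : ℝ, 0 < u → 0 ≤ (-1 : ℝ) ^ (n - 1) * iteratedDeriv n φ u

/-- `μ t` is the law of the subordinator with Laplace exponent `φ` at time `t > 0`. -/
def IsSubordinatorLaw (φ : ℝ → ℝ) (μ : ℝ → Measure ℝ) : Prop :=
  ∀ t : ℝ, 0 < t →
    IsProbabilityMeasure (μ t) ∧ μ t (Set.Iio 0) = 0 ∧
    ∀ l : ℝ, 0 ≤ l → (∫ s, Real.exp (-l * s) ∂μ t) = Real.exp (-t * φ l)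

/-- Generalized right-continuous inverse: `φ⁻¹(u) = inf {l > 0 : φ(l) ≥ u}`. -/
def genInv (φ : ℝ → ℝ) (u : ℝ) : ℝ := sInf {l : ℝ | 0 < l ∧ u ≤ φ l}

/- ============ auxiliary lemmas ============ -/

lemma bern_mono {φ : ℝ → ℝ} (hc : ContinuousOn φ (Set.Ici 0))
    (hd : ContDiffOn ℝ (⊤ : ℕ∞) φ (Set.Ioi 0))
    (hsign : ∀ n : ℕ, 1 ≤ n → ∀ u : ℝ, 0 < u → 0 ≤ (-1:ℝ)^(n-1) * iteratedDeriv n φ u) :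
    MonotoneOn φ (Set.Ici 0) := by
  apply monotoneOn_of_deriv_nonneg (convex_Ici 0) hc
  · rw [interior_Ici]
    intro u hu
    exact (((hd.differentiableOn (by simp)) u hu).differentiableAt
      (isOpen_Ioi.mem_nhds hu)).differentiableWithinAt
  · rw [interior_Ici]
    intro u hu
    simpa [iteratedDeriv_one] using hsign 1 le_rfl u hu

lemma exists_dyadic {x : ℝ} (hx : 1 ≤ x) : ∃ k : ℕ, (2:ℝ)^k ≤ x ∧ x < 2^(k+1) := by
  have hx0 : (0:ℝ) ≤ x := by linarith
  have h1 : 1 ≤ ⌊x⌋₊ := Nat.le_floor (by exact_mod_cast hx)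
  refine ⟨Nat.log 2 ⌊x⌋₊, ?_, ?_⟩
  · calc (2:ℝ)^(Nat.log 2 ⌊x⌋₊) = ((2^(Nat.log 2 ⌊x⌋₊) : ℕ) : ℝ) := by push_cast; ring
    _ ≤ (⌊x⌋₊ : ℝ) := by exact_mod_cast Nat.pow_log_le_self 2 (by omega)
    _ ≤ x := Nat.floor_le hx0
  · calc x < ⌊x⌋₊ + 1 := Nat.lt_floor_add_one x
    _ ≤ 2^(Nat.log 2 ⌊x⌋₊ + 1) := by
        exact_mod_cast Nat.succ_le_of_lt (Nat.lt_pow_succ_log_self (by norm_num) _)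

lemma min_le_exp_bound {x : ℝ} (hx : 0 ≤ x) : min 1 x ≤ 3 * (1 - Real.exp (-x)) := by
  have h3 : Real.exp (-x) * (1+x) ≤ 1 := by
    rw [Real.exp_neg, inv_mul_le_iff₀ (Real.exp_pos x)]
    linarith [Real.add_one_le_exp x]
  have hE := Real.exp_pos (-x)
  rcases le_total x 1 with h | h
  · rw [min_eq_right (by linarith : x ≤ 1)]
    nlinarith [mul_nonneg hx (sub_nonneg.mpr h)]
  · rw [min_eq_left (by linarith : (1:ℝ) ≤ x)]
    nlinarith

lemma lap_integrable {μ : Measure ℝ} {l E : ℝ} (h : (∫ s, Real.exp (-l*s) ∂μ) = E)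
    (hE : 0 < E) : Integrable (fun s => Real.exp (-l*s)) μ := by
  by_contra hni
  rw [integral_undef hni] at h; linarith

lemma markov_bound {μ : Measure ℝ} [IsProbabilityMeasure μ] (hneg : μ (Set.Iio 0) = 0)
    {t v u : ℝ} (hu : 0 < u)
    (hlap : (∫ s, Real.exp (-u⁻¹*s) ∂μ) = Real.exp (-t*v)) :
    μ (Set.Iic u) ≤ ENNReal.ofReal (Real.exp (1 - t*v)) := by
  have hint : Integrable (fun s => Real.exp (-u⁻¹*s)) μ := lap_integrable hlap (Real.exp_pos _)
  have key : (∫⁻ s, ENNReal.ofReal (Real.exp (-u⁻¹*s)) ∂μ) = ENNReal.ofReal (Real.exp (-t*v)) := by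
    rw [← hlap, ← ofReal_integral_eq_lintegral_ofReal hint
      (Filter.Eventually.of_forall fun s => (Real.exp_pos _).le)]
  have hsplit : Set.Iic u = Set.Iio 0 ∪ Set.Icc 0 u := by
    ext s
    simp only [mem_Iic, mem_union, mem_Iio, mem_Icc]
    constructor
    · intro h; rcases lt_or_ge s 0 with h' | h'
      · exact Or.inl h'
      · exact Or.inr ⟨h', h⟩
    · rintro (h | ⟨_, h⟩)
      · linarith
      · exact h
  calc μ (Set.Iic u) ≤ μ (Set.Iio 0) + μ (Set.Icc 0 u) := hsplit ▸ measure_union_le _ _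
    _ = μ (Set.Icc 0 u) := by rw [hneg, zero_add]
    _ = ∫⁻ s in Set.Icc 0 u, 1 ∂μ := (setLIntegral_one _).symm
    _ ≤ ∫⁻ s in Set.Icc 0 u, ENNReal.ofReal (Real.exp 1 * Real.exp (-u⁻¹*s)) ∂μ := by
        refine setLIntegral_mono (by fun_prop) fun s hs => ?_
        rw [show (1:ℝ≥0∞) = ENNReal.ofReal 1 by simp]
        apply ENNReal.ofReal_le_ofReal
        rw [← Real.exp_add]
        have h1 : u⁻¹ * s ≤ 1 := by
          rw [inv_mul_le_iff₀ hu]; simpa using hs.2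
        calc (1:ℝ) = Real.exp 0 := by simp
          _ ≤ Real.exp (1 + -u⁻¹*s) := Real.exp_le_exp.mpr (by linarith)
    _ ≤ ∫⁻ s, ENNReal.ofReal (Real.exp 1 * Real.exp (-u⁻¹*s)) ∂μ := setLIntegral_le_lintegral _ _
    _ = ENNReal.ofReal (Real.exp 1) * ∫⁻ s, ENNReal.ofReal (Real.exp (-u⁻¹*s)) ∂μ := by
        simp_rw [ENNReal.ofReal_mul (Real.exp_nonneg 1)]
        rw [lintegral_const_mul' _ _ ENNReal.ofReal_ne_top]
    _ = ENNReal.ofReal (Real.exp (1 - t*v)) := by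
        rw [key, ← ENNReal.ofReal_mul (Real.exp_nonneg 1), ← Real.exp_add]
        ring_nf

lemma lintegral_min_bound {μ : Measure ℝ} [IsProbabilityMeasure μ] (hneg : μ (Set.Iio 0) = 0)
    {t v l : ℝ} (hl : 0 < l) (htv : 0 ≤ t*v)
    (hlap : (∫ s, Real.exp (-l*s) ∂μ) = Real.exp (-t*v)) :
    (∫⁻ s, ENNReal.ofReal (min 1 (l*s)) ∂μ) ≤ ENNReal.ofReal (3*(t*v)) := by
  have hae : ∀ᵐ s ∂μ, 0 ≤ s := by
    rw [ae_iff]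
    convert hneg using 2
    ext s; simp
  have hint : Integrable (fun s => Real.exp (-l*s)) μ := lap_integrable hlap (Real.exp_pos _)
  have hint3 : Integrable (fun s => 3*(1 - Real.exp (-l*s))) μ :=
    ((integrable_const 1).sub hint).const_mul 3
  calc (∫⁻ s, ENNReal.ofReal (min 1 (l*s)) ∂μ)
      ≤ ∫⁻ s, ENNReal.ofReal (3*(1 - Real.exp (-l*s))) ∂μ := by
        apply lintegral_mono_ae
        filter_upwards [hae] with s hs
        apply ENNReal.ofReal_le_ofReal
        have := min_le_exp_bound (mul_nonneg hl.le hs)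
        rw [neg_mul]
        exact this
    _ = ENNReal.ofReal (∫ s, 3*(1-Real.exp (-l*s)) ∂μ) := by
        rw [ofReal_integral_eq_lintegral_ofReal hint3 ?_]
        filter_upwards [hae] with s hs
        have : Real.exp (-l*s) ≤ 1 := by
          rw [show (1:ℝ) = Real.exp 0 by simp]
          exact Real.exp_le_exp.mpr (by nlinarith)
        simp only [Pi.zero_apply]
        linarith
    _ ≤ ENNReal.ofReal (3*(t*v)) := by
        apply ENNReal.ofReal_le_ofReal
        rw [integral_const_mul, integral_sub (integrable_const 1) hint, hlap, integral_const]
        simp only [probReal_univ, smul_eq_mul, one_mul]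
        nlinarith [Real.add_one_le_exp (-t*v)]

theorem subordinated_exponential_kernel_upper_bound
    {M : Type*} [MetricSpace M] [MeasurableSpace M] [BorelSpace M]
    (W : M → M → ℝ → ℝ)
    (C₂ δ : ℝ) (hC₂ : 1 ≤ C₂) (hδ : 0 < δ)
    (hWpos : ∀ (x y : M) (r : ℝ), 0 < r → 0 < W x y r)
    (hWmono : ∀ x y : M, MonotoneOn (W x y) (Set.Ioi 0))
    (hWscal : ∀ (x y : M) (r R : ℝ), 0 < r → r ≤ R →
      W x y R / W x y r ≤ C₂ * (R / r) ^ δ)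
    (f : ℝ → ℝ) (hf : ∀ r : ℝ, 0 ≤ r → 0 < f r)
    (g : ℝ → ℝ) (hgpos : ∀ r : ℝ, 0 < r → 0 < g r)
    (hgmono : StrictMonoOn g (Set.Ioi 0))
    (c₁ α : ℝ) (hc₁0 : 0 < c₁) (hc₁1 : c₁ ≤ 1) (hα : 0 < α)
    (hgscal : ∀ r R : ℝ, 0 < r → r ≤ R → c₁ * (R / r) ^ α ≤ g R / g r)
    (p : ℝ → M → M → ℝ)
    (hpmeas : Measurable fun q : ℝ × M × M => p q.1 q.2.1 q.2.2)
    (hp0 : ∀ (s : ℝ), 0 < s → ∀ x y : M, 0 ≤ p s x y)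
    (hple : ∀ (s : ℝ), 0 < s → ∀ x y : M,
      p s x y ≤ 1 / W x y s * Real.exp (-g (f (dist x y) / s)))
    (φ : ℝ → ℝ) (hφ : IsBernstein φ) (hφ0 : φ 0 = 0)
    (β C₃ : ℝ) (hβ0 : 0 < β) (hβ1 : β ≤ 1) (hC₃ : 1 ≤ C₃)
    (hscal : ∀ l : ℝ, 0 < l → l ≤ 1 → ∀ θ : ℝ, 0 < θ → φ (l * θ) ≤ C₃ * l ^ β * φ θ)
    (μ : ℝ → Measure ℝ) (hμ : IsSubordinatorLaw φ μ) :
    ∃ C : ℝ, 1 ≤ C ∧ ∀ (x y : M) (t : ℝ), 0 < t →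
      (∫⁻ s in Set.Ioi (0 : ℝ), ENNReal.ofReal (p s x y) ∂μ t) ≤
        ENNReal.ofReal (C * min
          (1 / W x y (1 / genInv φ (1 / t)))
          (t * φ (1 / f (dist x y)) / W x y (f (dist x y)))) := by
  obtain ⟨hφc, hφd, hφnn, hφsign⟩ := hφ
  have hmono : MonotoneOn φ (Set.Ici 0) := bern_mono hφc hφd hφsign
  have hC₂0 : (0:ℝ) < C₂ := lt_of_lt_of_le one_pos hC₂
  have hC₃0 : (0:ℝ) < C₃ := lt_of_lt_of_le one_pos hC₃
  set n₁ : ℕ := ⌈(δ+1)/β⌉₊ with hn₁def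
  set n₂ : ℕ := ⌈(δ+1)/α⌉₊ with hn₂def
  have hδβn₁ : δ + 1 ≤ β * n₁ := by
    rw [mul_comm, ← div_le_iff₀ hβ0]
    exact Nat.le_ceil _
  have hδαn₂ : δ + 1 ≤ α * n₂ := by
    rw [mul_comm, ← div_le_iff₀ hα]
    exact Nat.le_ceil _
  set c : ℝ := c₁ * g 1 with hcdef
  have hc : 0 < c := mul_pos hc₁0 (hgpos 1 one_pos)
  set K : ℝ := max ((n₂.factorial : ℝ) / c^n₂) 1 with hKdef
  have hK1 : 1 ≤ K := le_max_right _ _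
  have hK0 : 0 < K := lt_of_lt_of_le one_pos hK1
  set D : ℝ := C₂ * 2^δ * Real.exp 1 * (n₁.factorial : ℝ) * C₃^n₁ with hDdef
  have hD0 : 0 < D := by
    have h2δ : (0:ℝ) < 2^δ := Real.rpow_pos_of_pos two_pos δ
    have hfac : (0:ℝ) < (n₁.factorial : ℝ) := by exact_mod_cast Nat.factorial_pos n₁
    positivity
  set CA : ℝ := 1 + 2*D with hCAdef
  set CB : ℝ := 3*(C₂*K) with hCBdef
  refine ⟨max CA CB, le_trans (by nlinarith : (1:ℝ) ≤ CA) (le_max_left _ _), ?_⟩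
  intro x y t ht
  obtain ⟨hprob, hneg, hlap⟩ := hμ t ht
  set ρ : ℝ := f (dist x y) with hρdef
  have hρ : 0 < ρ := hf _ dist_nonneg
  have hae : ∀ᵐ s ∂ μ t, 0 ≤ s := by
    rw [ae_iff]
    convert hneg using 2
    ext s; simp
  by_cases hφρ0 : φ (1/ρ) = 0
  · -- degenerate case: μ t is concentrated at 0
    have hzero : μ t (Set.Ioi 0) = 0 := by
      have hlapρ := hlap (1/ρ) (by positivity)
      rw [hφρ0, mul_zero, Real.exp_zero] at hlapρ
      have hint : Integrable (fun s => Real.exp (-(1/ρ)*s)) (μ t) := lap_integrable hlapρ one_pos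
      have hint2 : Integrable (fun s => 1 - Real.exp (-(1/ρ)*s)) (μ t) :=
        (integrable_const 1).sub hint
      have hnn : 0 ≤ᵐ[μ t] fun s => 1 - Real.exp (-(1/ρ)*s) := by
        filter_upwards [hae] with s hs
        simp only [Pi.zero_apply]
        have h1ρ : (0:ℝ) < 1/ρ := by positivity
        have : Real.exp (-(1/ρ)*s) ≤ 1 := Real.exp_le_one_iff.mpr (by nlinarith)
        linarith
      have hI : (∫ s, (1 - Real.exp (-(1/ρ)*s)) ∂ μ t) = 0 := by
        rw [integral_sub (integrable_const 1) hint, hlapρ, integral_const]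
        simp [measure_univ]
      have haezero := (integral_eq_zero_iff_of_nonneg_ae hnn hint2).mp hI
      refine measure_mono_null ?_ (ae_iff.mp haezero)
      intro s hs
      have hs' : (0:ℝ) < s := hs
      simp only [mem_setOf_eq, Pi.zero_apply]
      have h1ρ : (0:ℝ) < 1/ρ := by positivity
      have h1 : Real.exp (-(1/ρ)*s) < 1 := Real.exp_lt_one_iff.mpr (by nlinarith)
      intro hcontra; linarith
    rw [show (μ t).restrict (Set.Ioi 0) = 0 from Measure.restrict_eq_zero.mpr hzero,
      lintegral_zero_measure]
    exact zero_le
  · have hφρ : 0 < φ (1/ρ) := lt_of_le_of_ne (hφnn _ (Set.mem_Ici.mpr (by positivity))) (Ne.symm hφρ0)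
    have hWρ := hWpos x y ρ hρ
    -- p s x y ≤ 1 / W x y s for s > 0
    have hple' : ∀ s : ℝ, 0 < s → p s x y ≤ 1 / W x y s := by
      intro s hs
      refine (hple s hs x y).trans ?_
      have hg1 : Real.exp (-g (ρ/s)) ≤ 1 := by
        rw [show (1:ℝ) = Real.exp 0 by simp]
        exact Real.exp_le_exp.mpr (neg_nonpos.mpr (hgpos _ (by positivity)).le)
      have hw := hWpos x y s hs
      calc 1 / W x y s * Real.exp (-g (ρ/s)) ≤ 1 / W x y s * 1 :=
          mul_le_mul_of_nonneg_left hg1 (by positivity)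
        _ = 1 / W x y s := mul_one _
    -- the set S for genInv is nonempty
    have hSne : ∃ l : ℝ, l ∈ {l : ℝ | 0 < l ∧ 1/t ≤ φ l} := by
      set l0 : ℝ := min 1 ((t * φ (1/ρ) / C₃) ^ (1/β)) with hl0def
      have hx0 : 0 < t * φ (1/ρ) / C₃ := by positivity
      have hl00 : 0 < l0 := lt_min one_pos (Real.rpow_pos_of_pos hx0 _)
      have hl01 : l0 ≤ 1 := min_le_left _ _
      have hθ : 0 < 1/(l0 * ρ) := by positivity
      have hsc := hscal l0 hl00 hl01 (1/(l0*ρ)) hθ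
      have heq : l0 * (1/(l0*ρ)) = 1/ρ := by field_simp
      rw [heq] at hsc
      have hlb : l0 ^ β ≤ t * φ (1/ρ) / C₃ := by
        calc l0 ^ β ≤ ((t * φ (1/ρ) / C₃) ^ (1/β)) ^ β :=
              Real.rpow_le_rpow hl00.le (min_le_right _ _) hβ0.le
          _ = t * φ (1/ρ) / C₃ := by
              rw [← Real.rpow_mul hx0.le, one_div_mul_cancel hβ0.ne', Real.rpow_one]
      have hφθpos : 0 ≤ φ (1/(l0*ρ)) := hφnn _ (Set.mem_Ici.mpr hθ.le)
      refine ⟨1/(l0*ρ), hθ, ?_⟩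
      have h2 : φ (1/ρ) ≤ t * φ (1/ρ) * φ (1/(l0*ρ)) := by
        calc φ (1/ρ) ≤ C₃ * l0^β * φ (1/(l0*ρ)) := hsc
          _ ≤ C₃ * (t * φ (1/ρ) / C₃) * φ (1/(l0*ρ)) := by
              exact mul_le_mul_of_nonneg_right
                (mul_le_mul_of_nonneg_left hlb (by linarith)) hφθpos
          _ = t * φ (1/ρ) * φ (1/(l0*ρ)) := by field_simp
      rw [div_le_iff₀ ht]
      by_contra hcon
      push_neg at hcon
      have h3 : t * φ (1/ρ) * φ (1/(l0*ρ)) < φ (1/ρ) := by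
        calc t * φ (1/ρ) * φ (1/(l0*ρ)) = φ (1/ρ) * (φ (1/(l0*ρ)) * t) := by ring
          _ < φ (1/ρ) * 1 := mul_lt_mul_of_pos_left hcon hφρ
          _ = φ (1/ρ) := mul_one _
      linarith

    have hbdd : BddBelow {l : ℝ | 0 < l ∧ 1/t ≤ φ l} := ⟨0, fun l hl => hl.1.le⟩
    set lt : ℝ := genInv φ (1/t) with hltdef
    obtain ⟨l₁, hl₁⟩ := hSne
    have hε : ∃ ε : ℝ, 0 < ε ∧ ∀ l ∈ {l : ℝ | 0 < l ∧ 1/t ≤ φ l}, ε ≤ l := by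
      have hcw : ContinuousWithinAt φ (Set.Ici 0) 0 := hφc 0 Set.self_mem_Ici
      have hev : ∀ᶠ z in nhdsWithin 0 (Set.Ici 0), φ z < 1/t := by
        have h0 : φ 0 < 1/t := by rw [hφ0]; positivity
        exact hcw.eventually_lt_const h0
      obtain ⟨ε, hε0, hball⟩ := Metric.mem_nhdsWithin_iff.mp hev
      refine ⟨ε, hε0, fun l hl => ?_⟩
      by_contra hcon
      push_neg at hcon
      have hmem : l ∈ Metric.ball (0:ℝ) ε ∩ Set.Ici 0 :=
        ⟨by simpa [Real.dist_eq, abs_of_pos hl.1] using hcon, hl.1.le⟩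
      exact absurd (hball hmem) (not_lt.mpr hl.2)
    obtain ⟨ε, hε0, hεle⟩ := hε
    have hlt0 : 0 < lt := lt_of_lt_of_le hε0 (le_csInf ⟨l₁, hl₁⟩ hεle)
    have hφlt : 1/t ≤ φ lt := by
      have hcont : ContinuousAt φ lt :=
        ((hφd.continuousOn).continuousAt (isOpen_Ioi.mem_nhds hlt0))
      have hforall : ∀ z, lt < z → 1/t ≤ φ z := by
        intro z hz
        obtain ⟨l, hlS, hlz⟩ := exists_lt_of_csInf_lt ⟨l₁, hl₁⟩ hz
        exact le_trans hlS.2 (hmono hlS.1.le (le_trans hlS.1.le hlz.le) hlz.le)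
      refine ge_of_tendsto (hcont.continuousWithinAt.tendsto (s := Set.Ioi lt)) ?_
      exact eventually_mem_nhdsWithin.mono fun z hz => hforall z hz
    set r : ℝ := 1/lt with hrdef
    have hr0 : 0 < r := by positivity
    have hWr := hWpos x y r hr0
    have boundA : (∫⁻ s in Set.Ioi (0:ℝ), ENNReal.ofReal (p s x y) ∂ μ t) ≤
        ENNReal.ofReal (CA * (1 / W x y r)) := by
      have hsplit : Set.Ioi (0:ℝ) = Set.Ioc 0 r ∪ Set.Ioi r :=
        (Set.Ioc_union_Ioi_eq_Ioi hr0.le).symm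
      have piece2 : (∫⁻ s in Set.Ioi r, ENNReal.ofReal (p s x y) ∂ μ t) ≤
          ENNReal.ofReal (1 / W x y r) := by
        calc (∫⁻ s in Set.Ioi r, ENNReal.ofReal (p s x y) ∂ μ t)
            ≤ ∫⁻ _ in Set.Ioi r, ENNReal.ofReal (1 / W x y r) ∂ μ t := by
              refine setLIntegral_mono measurable_const fun s hs => ?_
              apply ENNReal.ofReal_le_ofReal
              refine (hple' s (hr0.trans hs)).trans ?_
              exact one_div_le_one_div_of_le hWr
                (hWmono x y (Set.mem_Ioi.mpr hr0) (Set.mem_Ioi.mpr (hr0.trans hs)) (le_of_lt hs))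
          _ = ENNReal.ofReal (1 / W x y r) * μ t (Set.Ioi r) := setLIntegral_const _ _
          _ ≤ ENNReal.ofReal (1 / W x y r) * 1 := mul_le_mul_right prob_le_one _
          _ = ENNReal.ofReal (1 / W x y r) := mul_one _
      have main : ∀ k : ℕ, (∫⁻ s in Set.Ioc (r/2^(k+1)) (r/2^k), ENNReal.ofReal (p s x y) ∂ μ t)
          ≤ ENNReal.ofReal ((D * (1/W x y r)) * (2⁻¹:ℝ)^k) := by
        intro k
        have h2k : (0:ℝ) < 2^k := by positivity
        have h2k1 : (0:ℝ) < 2^(k+1) := by positivity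
        have hu : (0:ℝ) < r/2^k := by positivity
        have hpw : ∀ s ∈ Set.Ioc (r/2^(k+1)) (r/2^k),
            p s x y ≤ C₂ * ((2:ℝ)^(k+1))^δ / W x y r := by
          intro s hs
          have hs0 : 0 < s := lt_trans (by positivity) hs.1
          have hWs := hWpos x y s hs0
          have hsr : s ≤ r := le_trans hs.2 (by
            rw [div_le_iff₀ h2k]
            nlinarith [one_le_pow₀ (one_le_two (α := ℝ)) (n := k), hr0])
          refine (hple' s hs0).trans ?_
          have hscW := hWscal x y s r hs0 hsr
          rw [div_le_iff₀ hWs] at hscW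
          have hrs2 : r/s < 2^(k+1) := by
            rw [div_lt_iff₀ hs0]
            have h7 := hs.1
            rw [div_lt_iff₀ h2k1] at h7
            linarith
          have hrs1 : (1:ℝ) ≤ r/s := (one_le_div hs0).mpr hsr
          have hd1 : (r/s)^δ ≤ ((2:ℝ)^(k+1))^δ :=
            Real.rpow_le_rpow (by linarith) hrs2.le hδ.le
          rw [div_le_div_iff₀ hWs hWr]
          have h8 := mul_le_mul_of_nonneg_right
            (mul_le_mul_of_nonneg_left hd1 hC₂0.le) hWs.le
          linarith
        have huinv : ((r/2^k)⁻¹ : ℝ) = 2^k * lt := by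
          rw [hrdef]
          field_simp
        have hil : ((2:ℝ)^k)⁻¹ ≤ 1 := inv_le_one_of_one_le₀ (one_le_pow₀ one_le_two)
        have hsck := hscal ((2:ℝ)^k)⁻¹ (by positivity) hil ((2:ℝ)^k * lt) (by positivity)
        rw [inv_mul_cancel_left₀ h2k.ne'] at hsck
        rw [Real.inv_rpow h2k.le] at hsck
        set X : ℝ := ((2:ℝ)^k)^β with hXdef
        have hXpos : 0 < X := Real.rpow_pos_of_pos h2k _
        have hφk : 0 ≤ φ ((2:ℝ)^k * lt) := hφnn _ (Set.mem_Ici.mpr (by positivity))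
        have hF1 : X / C₃ ≤ t * φ ((2:ℝ)^k * lt) := by
          have h5 : 1/t ≤ C₃ * X⁻¹ * φ ((2:ℝ)^k*lt) := hφlt.trans hsck
          rw [div_le_iff₀ ht] at h5
          rw [div_le_iff₀ hC₃0]
          calc X = X * 1 := (mul_one X).symm
            _ ≤ X * (C₃ * X⁻¹ * φ ((2:ℝ)^k*lt) * t) := mul_le_mul_of_nonneg_left h5 hXpos.le
            _ = t * φ ((2:ℝ)^k*lt) * C₃ := by
                field_simp
        have hXn : ((2:ℝ)^k)^(δ+1) ≤ X^n₁ := by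
          rw [hXdef, ← Real.rpow_natCast (((2:ℝ)^k)^β) n₁, ← Real.rpow_mul h2k.le]
          exact Real.rpow_le_rpow_of_exponent_le (one_le_pow₀ one_le_two) hδβn₁
        have hE0 : Real.exp (-(X/C₃)) ≤ (n₁.factorial : ℝ) * C₃^n₁ / X^n₁ := by
          have hXC : (0:ℝ) < X/C₃ := by positivity
          have hfac : (X/C₃)^n₁ * Real.exp (-(X/C₃)) ≤ (n₁.factorial : ℝ) := by
            rw [Real.exp_neg, mul_inv_le_iff₀ (Real.exp_pos _)]
            have h6 := Real.pow_div_factorial_le_exp _ hXC.le n₁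
            rw [div_le_iff₀ (by positivity : (0:ℝ) < (n₁.factorial : ℝ))] at h6
            linarith
          rw [div_pow] at hfac
          rw [le_div_iff₀ (pow_pos hXpos n₁)]
          calc Real.exp (-(X/C₃)) * X^n₁
              = (X^n₁/C₃^n₁ * Real.exp (-(X/C₃))) * C₃^n₁ := by
                field_simp
            _ ≤ (n₁.factorial : ℝ) * C₃^n₁ := mul_le_mul_of_nonneg_right hfac (by positivity)
        have hE : Real.exp (1 - t*φ ((2:ℝ)^k*lt)) ≤
            Real.exp 1 * ((n₁.factorial : ℝ) * C₃^n₁ / ((2:ℝ)^k)^(δ+1)) := by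
          rw [sub_eq_add_neg, Real.exp_add]
          apply mul_le_mul_of_nonneg_left _ (Real.exp_pos 1).le
          calc Real.exp (-(t*φ ((2:ℝ)^k*lt))) ≤ Real.exp (-(X/C₃)) :=
              Real.exp_le_exp.mpr (by linarith)
            _ ≤ (n₁.factorial : ℝ) * C₃^n₁ / X^n₁ := hE0
            _ ≤ (n₁.factorial : ℝ) * C₃^n₁ / ((2:ℝ)^k)^(δ+1) :=
                div_le_div_of_nonneg_left (by positivity)
                  (Real.rpow_pos_of_pos h2k _) hXn
        calc (∫⁻ s in Set.Ioc (r/2^(k+1)) (r/2^k), ENNReal.ofReal (p s x y) ∂ μ t)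
            ≤ ∫⁻ _ in Set.Ioc (r/2^(k+1)) (r/2^k),
                ENNReal.ofReal (C₂ * ((2:ℝ)^(k+1))^δ / W x y r) ∂ μ t :=
              setLIntegral_mono measurable_const fun s hs =>
                ENNReal.ofReal_le_ofReal (hpw s hs)
          _ = ENNReal.ofReal (C₂ * ((2:ℝ)^(k+1))^δ / W x y r) *
                μ t (Set.Ioc (r/2^(k+1)) (r/2^k)) := setLIntegral_const _ _
          _ ≤ ENNReal.ofReal (C₂ * ((2:ℝ)^(k+1))^δ / W x y r) *
                ENNReal.ofReal (Real.exp (1 - t * φ ((2:ℝ)^k * lt))) := by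
              apply mul_le_mul_right
              refine le_trans (measure_mono fun s hs => Set.mem_Iic.mpr hs.2) ?_
              have hmb := markov_bound hneg hu (hlap ((r/2^k)⁻¹) (by positivity))
              rwa [huinv] at hmb
          _ ≤ ENNReal.ofReal ((D * (1/W x y r)) * (2⁻¹:ℝ)^k) := by
              rw [← ENNReal.ofReal_mul (by positivity)]
              apply ENNReal.ofReal_le_ofReal
              have e2 : ((2:ℝ)^(k+1))^δ = ((2:ℝ)^k)^δ * 2^δ := by
                rw [pow_succ, Real.mul_rpow (by positivity) (by positivity)]
              have e4 : ((2:ℝ)^k)^(δ+1) = ((2:ℝ)^k)^δ * 2^k := by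
                rw [Real.rpow_add h2k, Real.rpow_one]
              calc C₂ * ((2:ℝ)^(k+1))^δ / W x y r * Real.exp (1 - t*φ ((2:ℝ)^k*lt))
                  ≤ C₂ * ((2:ℝ)^(k+1))^δ / W x y r *
                    (Real.exp 1 * ((n₁.factorial : ℝ) * C₃^n₁ / ((2:ℝ)^k)^(δ+1))) :=
                    mul_le_mul_of_nonneg_left hE (by positivity)
                _ = (D * (1/W x y r)) * (2⁻¹:ℝ)^k := by
                    rw [e2, e4, hDdef, inv_pow]
                    have hne : ((2:ℝ)^k)^δ ≠ 0 := (Real.rpow_pos_of_pos h2k δ).ne'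
                    field_simp
      rw [hsplit, lintegral_union measurableSet_Ioi (Set.Ioc_disjoint_Ioi le_rfl)]
      have piece1 : (∫⁻ s in Set.Ioc 0 r, ENNReal.ofReal (p s x y) ∂ μ t) ≤
          ENNReal.ofReal (2 * (D * (1/W x y r))) := by
        have hsub : Set.Ioc 0 r ⊆ ⋃ k : ℕ, Set.Ioc (r/2^(k+1)) (r/2^k) := by
          intro s hs
          obtain ⟨k, hk1, hk2⟩ := exists_dyadic ((one_le_div hs.1).mpr hs.2)
          refine Set.mem_iUnion.mpr ⟨k, ?_, ?_⟩
          · rw [div_lt_iff₀ (by positivity : (0:ℝ) < 2^(k+1))]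
            rw [div_lt_iff₀ hs.1] at hk2
            linarith
          · rw [le_div_iff₀ (by positivity : (0:ℝ) < 2^k)]
            rw [le_div_iff₀ hs.1] at hk1
            linarith
        calc (∫⁻ s in Set.Ioc 0 r, ENNReal.ofReal (p s x y) ∂ μ t)
            ≤ ∫⁻ s in ⋃ k : ℕ, Set.Ioc (r/2^(k+1)) (r/2^k), ENNReal.ofReal (p s x y) ∂ μ t :=
              lintegral_mono_set hsub
          _ ≤ ∑' k : ℕ, ∫⁻ s in Set.Ioc (r/2^(k+1)) (r/2^k), ENNReal.ofReal (p s x y) ∂ μ t :=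
              lintegral_iUnion_le _ _
          _ ≤ ∑' k : ℕ, ENNReal.ofReal ((D * (1/W x y r)) * (2⁻¹:ℝ)^k) :=
              ENNReal.tsum_le_tsum main
          _ = ENNReal.ofReal (∑' k : ℕ, (D * (1/W x y r)) * (2⁻¹:ℝ)^k) :=
              (ENNReal.ofReal_tsum_of_nonneg (fun k => by positivity)
                ((summable_geometric_of_lt_one (by norm_num) (by norm_num)).mul_left _)).symm
          _ = ENNReal.ofReal (2 * (D * (1/W x y r))) := by
              rw [tsum_mul_left, tsum_geometric_inv_two]
              congr 1
              ring
      calc (∫⁻ s in Set.Ioc 0 r, ENNReal.ofReal (p s x y) ∂ μ t) +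
            (∫⁻ s in Set.Ioi r, ENNReal.ofReal (p s x y) ∂ μ t)
          ≤ ENNReal.ofReal (2 * (D * (1/W x y r))) + ENNReal.ofReal (1 / W x y r) :=
            add_le_add piece1 piece2
        _ = ENNReal.ofReal (CA * (1 / W x y r)) := by
            rw [← ENNReal.ofReal_add (by positivity) (by positivity), hCAdef]
            congr 1
            ring
    have boundB : (∫⁻ s in Set.Ioi (0:ℝ), ENNReal.ofReal (p s x y) ∂ μ t) ≤
        ENNReal.ofReal (CB * (t * φ (1/ρ) / W x y ρ)) := by
      have hCK : (0:ℝ) ≤ C₂ * K / W x y ρ := by positivity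
      have claim : ∀ s ∈ Set.Ioi (0:ℝ), p s x y ≤ (C₂*K/W x y ρ) * min 1 ((1/ρ)*s) := by
        intro s hs
        rw [Set.mem_Ioi] at hs
        have hWs := hWpos x y s hs
        rcases le_or_gt ρ s with hcase | hcase
        · have hmin : min 1 ((1/ρ)*s) = 1 := min_eq_left (by
            rw [one_div, inv_mul_eq_div, le_div_iff₀ hρ, one_mul]; exact hcase)
          rw [hmin, mul_one]
          refine (hple' s hs).trans ?_
          have h1 : W x y ρ ≤ W x y s := hWmono x y hρ (Set.mem_Ioi.mpr hs) hcase
          calc 1 / W x y s ≤ 1 / W x y ρ := one_div_le_one_div_of_le hWρ h1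
            _ ≤ C₂*K/W x y ρ := by
                gcongr
                calc (1:ℝ) = 1*1 := (mul_one 1).symm
                  _ ≤ C₂*K := mul_le_mul hC₂ hK1 one_pos.le (by linarith)
        · have hu1 : 1 < ρ/s := (one_lt_div hs).mpr hcase
          have hu0 : 0 < ρ/s := by linarith
          have hmin : min 1 ((1/ρ)*s) = (1/ρ)*s := min_eq_right (by
            rw [one_div, inv_mul_eq_div, div_le_one hρ]; exact hcase.le)
          rw [hmin]
          refine (hple s hs x y).trans ?_
          -- bound on g
          have hgb : c * (ρ/s)^α ≤ g (ρ/s) := by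
            have hsc2 := hgscal 1 (ρ/s) one_pos hu1.le
            rw [div_one] at hsc2
            rw [le_div_iff₀ (hgpos 1 one_pos)] at hsc2
            rw [hcdef]
            nlinarith [hsc2]
          have hexp : Real.exp (-g (ρ/s)) ≤ Real.exp (-(c * (ρ/s)^α)) :=
            Real.exp_le_exp.mpr (by linarith)
          -- W bound
          have hWsb : 1 / W x y s ≤ C₂ * (ρ/s)^δ / W x y ρ := by
            rw [div_le_div_iff₀ hWs hWρ]
            have hscW := hWscal x y s ρ hs hcase.le
            rw [div_le_iff₀ hWs] at hscW
            linarith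
          -- key polynomial-vs-exponential bound
          have hXpos : 0 < c * (ρ/s)^α := by positivity
          have hfact : (c*(ρ/s)^α)^n₂ * Real.exp (-(c*(ρ/s)^α)) ≤ (n₂.factorial : ℝ) := by
            rw [Real.exp_neg, mul_inv_le_iff₀ (Real.exp_pos _)]
            have h6 := Real.pow_div_factorial_le_exp _ hXpos.le n₂
            rw [div_le_iff₀ (by positivity : (0:ℝ) < (n₂.factorial : ℝ))] at h6
            linarith
          have hkey : ((ρ/s)^δ * Real.exp (-(c*(ρ/s)^α))) * (ρ/s) ≤ K := by
            have e1 : (ρ/s)^δ * (ρ/s) ≤ ((ρ/s)^α)^n₂ := by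
              have e0 : (ρ/s)^δ * (ρ/s) = (ρ/s)^(δ+1) := by
                rw [Real.rpow_add_one hu0.ne']
              rw [e0, ← Real.rpow_natCast ((ρ/s)^α) n₂, ← Real.rpow_mul hu0.le]
              exact Real.rpow_le_rpow_of_exponent_le hu1.le hδαn₂
            calc ((ρ/s)^δ * Real.exp (-(c*(ρ/s)^α))) * (ρ/s)
                = ((ρ/s)^δ * (ρ/s)) * Real.exp (-(c*(ρ/s)^α)) := by ring
              _ ≤ ((ρ/s)^α)^n₂ * Real.exp (-(c*(ρ/s)^α)) :=
                  mul_le_mul_of_nonneg_right e1 (Real.exp_pos _).le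
              _ = ((c*(ρ/s)^α)^n₂ * Real.exp (-(c*(ρ/s)^α))) / c^n₂ := by
                  rw [mul_pow]
                  field_simp
              _ ≤ (n₂.factorial : ℝ) / c^n₂ := by gcongr
              _ ≤ K := le_max_left _ _
          have hkey' : (ρ/s)^δ * Real.exp (-(c*(ρ/s)^α)) ≤ K / (ρ/s) :=
            (le_div_iff₀ hu0).mpr hkey
          calc 1 / W x y s * Real.exp (-g (ρ/s))
              ≤ (C₂ * (ρ/s)^δ / W x y ρ) * Real.exp (-(c*(ρ/s)^α)) :=
                mul_le_mul hWsb hexp (Real.exp_pos _).le (by positivity)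
            _ = (C₂/W x y ρ) * ((ρ/s)^δ * Real.exp (-(c*(ρ/s)^α))) := by ring
            _ ≤ (C₂/W x y ρ) * (K/(ρ/s)) :=
                mul_le_mul_of_nonneg_left hkey' (by positivity)
            _ = (C₂*K/W x y ρ) * ((1/ρ)*s) := by
                field_simp
      calc (∫⁻ s in Set.Ioi (0:ℝ), ENNReal.ofReal (p s x y) ∂ μ t)
          ≤ ∫⁻ s in Set.Ioi (0:ℝ), ENNReal.ofReal ((C₂*K/W x y ρ) * min 1 ((1/ρ)*s)) ∂ μ t := by
            refine setLIntegral_mono (by fun_prop) fun s hs => ENNReal.ofReal_le_ofReal (claim s hs)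
        _ ≤ ∫⁻ s, ENNReal.ofReal ((C₂*K/W x y ρ) * min 1 ((1/ρ)*s)) ∂ μ t :=
            setLIntegral_le_lintegral _ _
        _ = ENNReal.ofReal (C₂*K/W x y ρ) * ∫⁻ s, ENNReal.ofReal (min 1 ((1/ρ)*s)) ∂ μ t := by
            simp_rw [ENNReal.ofReal_mul hCK]
            exact lintegral_const_mul' _ _ ENNReal.ofReal_ne_top
        _ ≤ ENNReal.ofReal (C₂*K/W x y ρ) * ENNReal.ofReal (3*(t*φ (1/ρ))) := by
            apply mul_le_mul_right
            exact lintegral_min_bound hneg (by positivity) (by positivity)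
              (hlap (1/ρ) (by positivity))
        _ = ENNReal.ofReal (CB * (t * φ (1/ρ) / W x y ρ)) := by
            rw [← ENNReal.ofReal_mul hCK]
            congr 1
            rw [hCBdef]
            field_simp
    have hP : (0:ℝ) ≤ 1 / W x y r := by positivity
    have hQ : (0:ℝ) ≤ t * φ (1/ρ) / W x y ρ := by positivity
    have hgoal : (1 : ℝ) / W x y (1 / genInv φ (1/t)) = 1 / W x y r := by rw [← hltdef, ← hrdef]
    rw [hgoal]
    rcases le_total (1 / W x y r) (t * φ (1/ρ) / W x y ρ) with h | h
    · rw [min_eq_left h]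
      exact boundA.trans (ENNReal.ofReal_le_ofReal
        (mul_le_mul_of_nonneg_right (le_max_left _ _) hP))
    · rw [min_eq_right h]
      exact boundB.trans (ENNReal.ofReal_le_ofReal
        (mul_le_mul_of_nonneg_right (le_max_right _ _) hQ))
end
end

section
/- Let φ be a Bernstein function with φ(0) = 0, with subordinator laws μ_t, and let U be the potential measure U(A) = ∫_0^∞ μ_t(A) dt. Fix t_0 > 0. Let W: (0,∞) → (0,∞) be non-decreasing with W(R)/W(r) ≥ c_1·(R/r)^δ for all R ≥ r > 0, for some c_1 ∈ (0,1] and δ > 1. Let p: (0,∞) → [0,∞) be measurable with p(s) ≤ min{1/W(s), 1/W(t_0)} for all s > 0. Then there is a constant c > 0, depending only on δ and c_1, such that ∫_{(0,∞)} p(s) U(ds) ≤ c / (W(t_0)·φ(1/t_0)). -/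
open MeasureTheory Real Set

noncomputable section

lemma bernstein_concave {φ : ℝ → ℝ} (hφ : IsBernstein φ) : ConcaveOn ℝ (Ici 0) φ := by
  obtain ⟨hc, hsm, hnn, hsign⟩ := hφ
  have hi : interior (Ici (0:ℝ)) = Ioi 0 := interior_Ici
  refine concaveOn_of_deriv2_nonpos (convex_Ici 0) hc ?_ ?_ ?_
  · rw [hi]; exact hsm.differentiableOn (by simp)
  · rw [hi]
    exact (hsm.deriv_of_isOpen isOpen_Ioi (WithTop.coe_le_coe.2 (le_top : (1:ℕ∞) + 1 ≤ ⊤) : (1:WithTop ℕ∞) + 1 ≤ ((⊤ : ℕ∞) : WithTop ℕ∞))).differentiableOn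
      one_ne_zero
  · intro x hx
    rw [hi] at hx
    have := hsign 2 (by norm_num) x hx
    rw [← iteratedDeriv_eq_iterate]
    simpa using this

lemma bernstein_scale {φ : ℝ → ℝ} (hφ : IsBernstein φ) (hφ0 : φ 0 = 0)
    {u l : ℝ} (hu : 0 < u) (hl : 0 < l) (hl1 : l ≤ 1) : l * φ u ≤ φ (l * u) := by
  have hc := bernstein_concave hφ
  have h2 := hc.2
  have := h2 (mem_Ici.2 le_rfl) (mem_Ici.2 hu.le) (a := 1 - l) (b := l)
    (by linarith) hl.le (by ring)
  simpa [hφ0] using this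

/-- integrability of the Laplace kernel, from the fact that the Laplace transform is positive -/
lemma laplace_integrable {φ : ℝ → ℝ} {μ : ℝ → Measure ℝ} (hμ : IsSubordinatorLaw φ μ)
    {t : ℝ} (ht : 0 < t) {l : ℝ} (hl : 0 ≤ l) :
    Integrable (fun s : ℝ => Real.exp (-l * s)) (μ t) := by
  by_contra h
  have heq := (hμ t ht).2.2 l hl
  rw [integral_undef h] at heq
  exact (Real.exp_pos _).ne heq

lemma ae_nonneg_of_law {ν : Measure ℝ} (h : ν (Set.Iio 0) = 0) : ∀ᵐ s ∂ν, 0 ≤ s := by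
  rw [ae_iff]
  convert h using 2
  ext s
  simp [not_le]

/-- Key potential estimate: `U([0,x]) ≤ e / φ(1/x)`. -/
lemma potential_bound {φ : ℝ → ℝ} {μ : ℝ → Measure ℝ} (hμ : IsSubordinatorLaw φ μ)
    {U : Measure ℝ}
    (hU : ∀ s : Set ℝ, MeasurableSet s → U s = ∫⁻ t in Set.Ioi (0 : ℝ), μ t s)
    {x : ℝ} (hx : 0 < x) (hpos : 0 < φ (1 / x)) :
    U (Icc 0 x) ≤ ENNReal.ofReal (Real.exp 1 / φ (1 / x)) := by
  set a := φ (1 / x) with ha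
  have hinvx : (0:ℝ) ≤ 1 / x := by positivity
  -- pointwise in t bound
  have step1 : ∀ t : ℝ, t ∈ Ioi (0:ℝ) →
      μ t (Icc 0 x) ≤ ENNReal.ofReal (Real.exp 1 * Real.exp (-(a * t))) := by
    intro t ht
    obtain ⟨hprob, hzero, hlap⟩ := hμ t ht
    have hInt : Integrable (fun s : ℝ => Real.exp (-(1/x) * s)) (μ t) :=
      laplace_integrable hμ ht hinvx
    have hae : ∀ᵐ s ∂μ t, 0 ≤ s := ae_nonneg_of_law hzero
    have h1 : ∫ s, (Icc (0:ℝ) x).indicator 1 s ∂μ t = (μ t (Icc 0 x)).toReal :=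
      integral_indicator_one measurableSet_Icc
    have h2 : ∫ s, (Icc (0:ℝ) x).indicator 1 s ∂μ t
        ≤ ∫ s, Real.exp 1 * Real.exp (-(1/x) * s) ∂μ t := by
      refine integral_mono_ae ((integrable_const (1:ℝ)).indicator measurableSet_Icc)
        (hInt.const_mul _) ?_
      filter_upwards [hae] with s hs
      by_cases hmem : s ∈ Icc (0:ℝ) x
      · have hsx : s / x ≤ 1 := (div_le_one hx).2 hmem.2
        have : (1:ℝ) ≤ Real.exp (1 - s / x) := Real.one_le_exp (by linarith)
        rw [Set.indicator_of_mem hmem]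
        calc (1 : ℝ) ≤ Real.exp (1 - s/x) := this
        _ = Real.exp 1 * Real.exp (-(1/x) * s) := by
            rw [← Real.exp_add]; ring_nf
      · rw [Set.indicator_of_notMem hmem]
        positivity
    have h3 : ∫ s, Real.exp 1 * Real.exp (-(1/x) * s) ∂μ t
        = Real.exp 1 * Real.exp (-(a * t)) := by
      rw [integral_const_mul, hlap (1/x) hinvx]
      congr 1
      rw [← ha]; ring_nf
    have hfin : μ t (Icc 0 x) ≠ ⊤ := measure_ne_top _ _
    rw [← ENNReal.ofReal_toReal hfin]
    exact ENNReal.ofReal_le_ofReal (by rw [← h3, ← h1]; exact h2)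
  rw [hU _ measurableSet_Icc]
  have hmeas : Measurable fun t : ℝ => ENNReal.ofReal (Real.exp 1 * Real.exp (-(a * t))) := by
    fun_prop
  calc ∫⁻ t in Ioi (0:ℝ), μ t (Icc 0 x)
      ≤ ∫⁻ t in Ioi (0:ℝ), ENNReal.ofReal (Real.exp 1 * Real.exp (-(a * t))) :=
        setLIntegral_mono hmeas step1
    _ = ENNReal.ofReal (Real.exp 1 / a) := by
        have hint : IntegrableOn (fun t : ℝ => Real.exp 1 * Real.exp (-(a * t))) (Ioi 0) := by
          have := (exp_neg_integrableOn_Ioi 0 hpos).const_mul (Real.exp 1)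
          simp only [neg_mul] at this
          exact this
        rw [← ofReal_integral_eq_lintegral_ofReal hint
          (Filter.Eventually.of_forall fun t => by positivity)]
        congr 1
        rw [MeasureTheory.integral_const_mul]
        have hsub := MeasureTheory.integral_comp_mul_left_Ioi
          (fun u => Real.exp (-u)) 0 hpos
        simp only [mul_zero] at hsub
        rw [show (fun t : ℝ => Real.exp (-(a * t))) = fun t : ℝ => Real.exp (-(a * t)) from rfl]
        have : ∫ t in Ioi (0:ℝ), Real.exp (-(a * t)) = a⁻¹ * Real.exp (-(0:ℝ)) := by
          rw [hsub, integral_exp_neg_Ioi, smul_eq_mul]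
        rw [this]
        simp [div_eq_mul_inv]

lemma law_zero {φ : ℝ → ℝ} {μ : ℝ → Measure ℝ} (hμ : IsSubordinatorLaw φ μ)
    {t l : ℝ} (ht : 0 < t) (hl : 0 < l) (hφl : φ l = 0) : μ t (Ioi 0) = 0 := by
  obtain ⟨hprob, hzero, hlap⟩ := hμ t ht
  have hlap1 : ∫ s, Real.exp (-l * s) ∂μ t = 1 := by
    rw [hlap l hl.le, hφl]; simp
  have hInt : Integrable (fun s : ℝ => Real.exp (-l * s)) (μ t) :=
    laplace_integrable hμ ht hl.le
  have hae : ∀ᵐ s ∂μ t, 0 ≤ s := ae_nonneg_of_law hzero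
  set g : ℝ → ℝ := fun s => 1 - Real.exp (-l * s) with hg
  have hgInt : Integrable g (μ t) := (integrable_const 1).sub hInt
  have hg0 : ∫ s, g s ∂μ t = 0 := by
    rw [integral_sub (integrable_const 1) hInt, hlap1, integral_const]
    simp
  have hgnn : 0 ≤ᵐ[μ t] g := by
    filter_upwards [hae] with s hs
    have : Real.exp (-l * s) ≤ 1 := Real.exp_le_one_iff.2 (by nlinarith)
    simp only [hg, Pi.zero_apply]
    linarith
  have hgz : g =ᵐ[μ t] 0 := (integral_eq_zero_iff_of_nonneg_ae hgnn hgInt).1 hg0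
  have hfinal : ∀ᵐ s ∂μ t, s ∉ Ioi (0:ℝ) := by
    filter_upwards [hgz] with s hgs
    intro hs
    have hs' : (0:ℝ) < s := hs
    have : Real.exp (-l * s) < 1 := by
      rw [show (1:ℝ) = Real.exp 0 by rw [Real.exp_zero]]
      exact Real.exp_lt_exp.2 (by nlinarith)
    simp only [hg, Pi.zero_apply] at hgs
    linarith
  rw [← MeasureTheory.compl_mem_ae_iff]
  exact hfinal

theorem subordinated_green_function_upper_bound
    (φ : ℝ → ℝ) (hφ : IsBernstein φ) (hφ0 : φ 0 = 0)
    (μ : ℝ → Measure ℝ) (hμ : IsSubordinatorLaw φ μ)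
    (U : Measure ℝ)
    (hU : ∀ s : Set ℝ, MeasurableSet s → U s = ∫⁻ t in Set.Ioi (0 : ℝ), μ t s)
    (t₀ : ℝ) (ht₀ : 0 < t₀)
    (W : ℝ → ℝ) (hWpos : ∀ r : ℝ, 0 < r → 0 < W r)
    (hWmono : MonotoneOn W (Set.Ioi 0))
    (c₁ δ : ℝ) (hc₁0 : 0 < c₁) (hc₁1 : c₁ ≤ 1) (hδ : 1 < δ)
    (hWscal : ∀ r R : ℝ, 0 < r → r ≤ R → c₁ * (R / r) ^ δ ≤ W R / W r)
    (p : ℝ → ℝ) (hpmeas : Measurable p) (hp0 : ∀ s : ℝ, 0 < s → 0 ≤ p s)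
    (hple : ∀ s : ℝ, 0 < s → p s ≤ min (1 / W s) (1 / W t₀)) :
    ∃ c : ℝ, 0 < c ∧
      (∫⁻ s in Set.Ioi (0 : ℝ), ENNReal.ofReal (p s) ∂U) ≤
        ENNReal.ofReal (c / (W t₀ * φ (1 / t₀))) := by
  have hinvt₀ : (0:ℝ) < 1 / t₀ := by positivity
  rcases eq_or_lt_of_le (hφ.2.2.1 (1/t₀) (le_of_lt hinvt₀)) with ha0 | hpos
  · -- degenerate case : φ (1/t₀) = 0
    refine ⟨1, one_pos, ?_⟩
    have hU0 : U (Ioi 0) = 0 := by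
      rw [hU _ measurableSet_Ioi]
      rw [← le_zero_iff]
      calc ∫⁻ t in Ioi (0:ℝ), μ t (Ioi 0)
          ≤ ∫⁻ _ in Ioi (0:ℝ), 0 := setLIntegral_mono' measurableSet_Ioi
            (fun t ht => le_of_eq (law_zero hμ ht hinvt₀ ha0.symm))
        _ = 0 := by simp
    have hres : U.restrict (Ioi 0) = 0 := Measure.restrict_eq_zero.2 hU0
    rw [hres, lintegral_zero_measure]
    exact zero_le
  · -- main case
    set a := φ (1 / t₀) with ha
    have hW0 : 0 < W t₀ := hWpos t₀ ht₀
    have hane : a ≠ 0 := ne_of_gt hpos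
    -- the key potential bound for x ≥ t₀
    have key : ∀ x : ℝ, t₀ ≤ x →
        U (Icc 0 x) ≤ ENNReal.ofReal (Real.exp 1 * (x / t₀) / a) := by
      intro x hx
      have hx0 : 0 < x := lt_of_lt_of_le ht₀ hx
      have hscale : t₀ / x * a ≤ φ (1 / x) := by
        have h := bernstein_scale hφ hφ0 (u := 1/t₀) (l := t₀/x)
          hinvt₀ (by positivity) ((div_le_one hx0).2 hx)
        rw [show t₀ / x * (1 / t₀) = 1 / x by field_simp] at h
        exact h
      have hφx : 0 < φ (1 / x) := lt_of_lt_of_le (by positivity) hscale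
      calc U (Icc 0 x) ≤ ENNReal.ofReal (Real.exp 1 / φ (1 / x)) :=
            potential_bound hμ hU hx0 hφx
        _ ≤ ENNReal.ofReal (Real.exp 1 * (x / t₀) / a) := by
            apply ENNReal.ofReal_le_ofReal
            rw [div_le_div_iff₀ hφx hpos]
            have h1 : Real.exp 1 * (x / t₀) * (t₀ / x * a) = Real.exp 1 * a := by
              field_simp
            nlinarith [mul_le_mul_of_nonneg_left hscale
              (le_of_lt (mul_pos (Real.exp_pos 1) (by positivity : (0:ℝ) < x / t₀)))]
    set q : ℝ := (2:ℝ) ^ (1 - δ) with hqdef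
    have hq0 : 0 < q := Real.rpow_pos_of_pos two_pos _
    have hq1 : q < 1 := Real.rpow_lt_one_of_one_lt_of_neg one_lt_two (by linarith)
    have h1q : 0 < 1 - q := by linarith
    have h2δ : (0:ℝ) < (2:ℝ) ^ δ := Real.rpow_pos_of_pos two_pos _
    have hqeq : q = 2 / (2:ℝ) ^ δ := by
      rw [hqdef, Real.rpow_sub two_pos, Real.rpow_one]
    refine ⟨Real.exp 1 + 2 * Real.exp 1 / (c₁ * (1 - q)),
      by positivity, ?_⟩
    have hsplit : Ioi (0:ℝ) = Ioc 0 t₀ ∪ Ioi t₀ := (Ioc_union_Ioi_eq_Ioi ht₀.le).symm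
    rw [hsplit, lintegral_union measurableSet_Ioi (Ioc_disjoint_Ioi le_rfl)]
    -- piece 1
    have piece1 : ∫⁻ s in Ioc (0:ℝ) t₀, ENNReal.ofReal (p s) ∂U
        ≤ ENNReal.ofReal (Real.exp 1 / (W t₀ * a)) := by
      calc ∫⁻ s in Ioc (0:ℝ) t₀, ENNReal.ofReal (p s) ∂U
          ≤ ∫⁻ _ in Ioc (0:ℝ) t₀, ENNReal.ofReal (1 / W t₀) ∂U :=
            setLIntegral_mono' measurableSet_Ioc (fun s hs =>
              ENNReal.ofReal_le_ofReal ((hple s hs.1).trans (min_le_right _ _)))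
        _ = ENNReal.ofReal (1 / W t₀) * U (Ioc 0 t₀) := setLIntegral_const _ _
        _ ≤ ENNReal.ofReal (1 / W t₀) * ENNReal.ofReal (Real.exp 1 * (t₀ / t₀) / a) := by
            gcongr
            exact le_trans (measure_mono Ioc_subset_Icc_self) (key t₀ le_rfl)
        _ = ENNReal.ofReal (Real.exp 1 / (W t₀ * a)) := by
            rw [div_self ht₀.ne', mul_one, ← ENNReal.ofReal_mul (by positivity)]
            congr 1
            field_simp
    -- dyadic pieces
    have hsubset : Ioi t₀ ⊆ ⋃ n : ℕ, Ioc ((2:ℝ)^n * t₀) ((2:ℝ)^(n+1) * t₀) := by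
      intro s hs
      have hs' : t₀ < s := hs
      have hex : ∃ k : ℕ, s ≤ 2^(k+1) * t₀ := by
        obtain ⟨m, hm⟩ := pow_unbounded_of_one_lt (s / t₀) (one_lt_two (α := ℝ))
        refine ⟨m, ?_⟩
        have h1 : s < 2^m * t₀ := by
          rw [div_lt_iff₀ ht₀] at hm; linarith
        have h2 : (2:ℝ)^m ≤ 2^(m+1) := by
          apply pow_le_pow_right₀ one_le_two (Nat.le_succ m)
        nlinarith
      classical
      obtain ⟨k, hk1, hk2⟩ : ∃ k : ℕ, s ≤ 2^(k+1) * t₀ ∧ (2:ℝ)^k * t₀ < s := by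
        refine ⟨Nat.find hex, Nat.find_spec hex, ?_⟩
        rcases Nat.eq_zero_or_pos (Nat.find hex) with h0 | hposk
        · rw [h0]; simpa using hs'
        · obtain ⟨j, hj⟩ := Nat.exists_eq_succ_of_ne_zero hposk.ne'
          rw [hj]
          have hmin := Nat.find_min hex (m := j) (by omega)
          push_neg at hmin
          exact hmin
      exact mem_iUnion.2 ⟨k, hk2, hk1⟩
    have termbound : ∀ n : ℕ,
        ∫⁻ s in Ioc ((2:ℝ)^n * t₀) ((2:ℝ)^(n+1) * t₀), ENNReal.ofReal (p s) ∂U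
          ≤ ENNReal.ofReal (2 * Real.exp 1 / (c₁ * W t₀ * a) * q ^ n) := by
      intro n
      have h2n : (1:ℝ) ≤ 2^n := one_le_pow₀ one_le_two
      have h2npos : (0:ℝ) < 2^n := by positivity
      have hdpos : 0 < c₁ * ((2:ℝ)^δ)^n * W t₀ := by positivity
      have hWs : ∀ s ∈ Ioc ((2:ℝ)^n * t₀) ((2:ℝ)^(n+1) * t₀),
          c₁ * ((2:ℝ)^δ)^n * W t₀ ≤ W s := by
        intro s hs
        have hs0 : (2:ℝ)^n * t₀ < s := hs.1
        have hspos : 0 < s := lt_trans (by positivity) hs0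
        have hscal := hWscal t₀ ((2:ℝ)^n * t₀) ht₀
          (le_mul_of_one_le_left ht₀.le h2n)
        rw [mul_div_assoc, div_self ht₀.ne', mul_one] at hscal
        have hrpow : ((2:ℝ)^n : ℝ) ^ δ = ((2:ℝ)^δ)^n := by
          rw [← Real.rpow_natCast (2:ℝ) n, ← Real.rpow_natCast ((2:ℝ)^δ) n,
            ← Real.rpow_mul (by norm_num), ← Real.rpow_mul (by norm_num), mul_comm]
        rw [hrpow] at hscal
        have h5 : c₁ * ((2:ℝ)^δ)^n * W t₀ ≤ W ((2:ℝ)^n * t₀) :=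
          (le_div_iff₀ hW0).1 hscal
        exact h5.trans (hWmono (mem_Ioi.2 (by positivity)) (mem_Ioi.2 hspos) hs0.le)
      calc ∫⁻ s in Ioc ((2:ℝ)^n * t₀) ((2:ℝ)^(n+1) * t₀), ENNReal.ofReal (p s) ∂U
          ≤ ∫⁻ _ in Ioc ((2:ℝ)^n * t₀) ((2:ℝ)^(n+1) * t₀),
              ENNReal.ofReal (1 / (c₁ * ((2:ℝ)^δ)^n * W t₀)) ∂U := by
            refine setLIntegral_mono' measurableSet_Ioc (fun s hs => ?_)
            have hspos : 0 < s := lt_trans (by positivity) hs.1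
            refine ENNReal.ofReal_le_ofReal (((hple s hspos).trans
              (min_le_left _ _)).trans ?_)
            exact one_div_le_one_div_of_le hdpos (hWs s hs)
        _ = ENNReal.ofReal (1 / (c₁ * ((2:ℝ)^δ)^n * W t₀)) *
              U (Ioc ((2:ℝ)^n * t₀) ((2:ℝ)^(n+1) * t₀)) := setLIntegral_const _ _
        _ ≤ ENNReal.ofReal (1 / (c₁ * ((2:ℝ)^δ)^n * W t₀)) *
              ENNReal.ofReal (Real.exp 1 * ((2:ℝ)^(n+1) * t₀ / t₀) / a) := by
            gcongr
            refine le_trans (measure_mono ?_) (key ((2:ℝ)^(n+1) * t₀)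
              (le_mul_of_one_le_left ht₀.le (one_le_pow₀ one_le_two)))
            intro s hs
            exact ⟨le_of_lt (lt_trans (by positivity) hs.1), hs.2⟩
        _ ≤ ENNReal.ofReal (2 * Real.exp 1 / (c₁ * W t₀ * a) * q ^ n) := by
            rw [← ENNReal.ofReal_mul (by positivity)]
            apply ENNReal.ofReal_le_ofReal
            apply le_of_eq
            rw [mul_div_assoc ((2:ℝ)^(n+1)) t₀ t₀, div_self ht₀.ne', mul_one]
            have hqn : q ^ n = 2^n / ((2:ℝ)^δ)^n := by rw [hqeq, div_pow]
            rw [hqn, pow_succ]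
            field_simp
    have piece2 : ∫⁻ s in Ioi t₀, ENNReal.ofReal (p s) ∂U
        ≤ ENNReal.ofReal (2 * Real.exp 1 / (c₁ * W t₀ * a) * (1 - q)⁻¹) := by
      calc ∫⁻ s in Ioi t₀, ENNReal.ofReal (p s) ∂U
          ≤ ∫⁻ s in ⋃ n : ℕ, Ioc ((2:ℝ)^n * t₀) ((2:ℝ)^(n+1) * t₀),
              ENNReal.ofReal (p s) ∂U := lintegral_mono_set hsubset
        _ ≤ ∑' n : ℕ, ∫⁻ s in Ioc ((2:ℝ)^n * t₀) ((2:ℝ)^(n+1) * t₀),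
              ENNReal.ofReal (p s) ∂U := lintegral_iUnion_le _ _
        _ ≤ ∑' n : ℕ, ENNReal.ofReal (2 * Real.exp 1 / (c₁ * W t₀ * a) * q ^ n) :=
            ENNReal.tsum_le_tsum termbound
        _ = ENNReal.ofReal (∑' n : ℕ, 2 * Real.exp 1 / (c₁ * W t₀ * a) * q ^ n) :=
            (ENNReal.ofReal_tsum_of_nonneg (fun n => by positivity)
              ((summable_geometric_of_lt_one hq0.le hq1).mul_left _)).symm
        _ = ENNReal.ofReal (2 * Real.exp 1 / (c₁ * W t₀ * a) * (1 - q)⁻¹) := by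
            rw [tsum_mul_left, tsum_geometric_of_lt_one hq0.le hq1]
    calc ∫⁻ s in Ioc (0:ℝ) t₀, ENNReal.ofReal (p s) ∂U +
          ∫⁻ s in Ioi t₀, ENNReal.ofReal (p s) ∂U
        ≤ ENNReal.ofReal (Real.exp 1 / (W t₀ * a)) +
          ENNReal.ofReal (2 * Real.exp 1 / (c₁ * W t₀ * a) * (1 - q)⁻¹) :=
          add_le_add piece1 piece2
      _ = ENNReal.ofReal (Real.exp 1 / (W t₀ * a) +
            2 * Real.exp 1 / (c₁ * W t₀ * a) * (1 - q)⁻¹) :=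
          (ENNReal.ofReal_add (by positivity) (by positivity)).symm
      _ ≤ ENNReal.ofReal ((Real.exp 1 + 2 * Real.exp 1 / (c₁ * (1 - q))) / (W t₀ * a)) := by
          apply ENNReal.ofReal_le_ofReal
          apply le_of_eq
          field_simp
end
end
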